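/- Define the discrete Legendre transforms 𝔽⁺(q_0, q_1) = (q_1, D₂L(q_0,q_1) + F⁺(q_0,q_1)) and 𝔽⁻(q_0, q_1) = (q_0, -D₁L(q_0,q_1) - F⁻(q_0,q_1)). If Υ(q_{k-1}, q_k) = (q_k, q_{k+1}) is a discrete flow whose image satisfies the discrete forced Euler-Lagrange equations, then 𝔽⁺ = 𝔽⁻ ∘ Υ on the domain of Υ. -/

import Mathlib

theorem legendre_transform_flow_identity_general {n : ℕ}
    (L : EuclideanSpace ℝ (Fin n) × EuclideanSpace ℝ (Fin n) → ℝ)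
    (Fplus Fminus : EuclideanSpace ℝ (Fin n) × EuclideanSpace ℝ (Fin n) →
      EuclideanSpace ℝ (Fin n))
    (FLp FLm : EuclideanSpace ℝ (Fin n) × EuclideanSpace ℝ (Fin n) →
      EuclideanSpace ℝ (Fin n) × EuclideanSpace ℝ (Fin n))
    (hFLp : ∀ z, FLp z = (z.2, gradient (fun y => L (z.1, y)) z.2 + Fplus z))
    (hFLm : ∀ z, FLm z = (z.1, -gradient (fun x => L (x, z.2)) z.1 - Fminus z))
    (S : Set (EuclideanSpace ℝ (Fin n) × EuclideanSpace ℝ (Fin n)))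
    (Υ : EuclideanSpace ℝ (Fin n) × EuclideanSpace ℝ (Fin n) →
      EuclideanSpace ℝ (Fin n) × EuclideanSpace ℝ (Fin n))
    (hstep : ∀ z ∈ S, (Υ z).1 = z.2)
    (hEL : ∀ z ∈ S,
      gradient (fun x => L (x, (Υ z).2)) z.2
        + gradient (fun y => L (z.1, y)) z.2
        + Fminus (z.2, (Υ z).2) + Fplus (z.1, z.2) = 0) :
    ∀ z ∈ S, FLp z = FLm (Υ z) := by
  intro z hz
  have hΥ : Υ z = (z.2, (Υ z).2) := Prod.ext (hstep z hz) rfl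
  rw [hFLp, hFLm, hΥ]
  exact Prod.ext rfl (by linear_combination (norm := module) hEL z hz)

/-- with the discrete Legendre transforms
`𝔽⁺(q₀,q₁) = (q₁, D₂L(q₀,q₁) + F⁺(q₀,q₁))` and
`𝔽⁻(q₀,q₁) = (q₀, -D₁L(q₀,q₁) - F⁻(q₀,q₁))`, if `Υ` is a discrete flow on a set `S`
with `Υ(q_{k-1},q_k) = (q_k, q_{k+1})` whose image satisfies the discrete forced
Euler–Lagrange equations, then `𝔽⁺ = 𝔽⁻ ∘ Υ` on `S`. -/
theorem legendre_transform_flow_identity {n : ℕ}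
    (L : EuclideanSpace ℝ (Fin n) × EuclideanSpace ℝ (Fin n) → ℝ)
    (Fplus Fminus : EuclideanSpace ℝ (Fin n) × EuclideanSpace ℝ (Fin n) →
      EuclideanSpace ℝ (Fin n))
    (hL : Differentiable ℝ L)
    (FLp FLm : EuclideanSpace ℝ (Fin n) × EuclideanSpace ℝ (Fin n) →
      EuclideanSpace ℝ (Fin n) × EuclideanSpace ℝ (Fin n))
    (hFLp : ∀ z, FLp z = (z.2, gradient (fun y => L (z.1, y)) z.2 + Fplus z))
    (hFLm : ∀ z, FLm z = (z.1, -gradient (fun x => L (x, z.2)) z.1 - Fminus z))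
    (S : Set (EuclideanSpace ℝ (Fin n) × EuclideanSpace ℝ (Fin n)))
    (Υ : EuclideanSpace ℝ (Fin n) × EuclideanSpace ℝ (Fin n) →
      EuclideanSpace ℝ (Fin n) × EuclideanSpace ℝ (Fin n))
    (hstep : ∀ z ∈ S, (Υ z).1 = z.2)
    (hEL : ∀ z ∈ S,
      gradient (fun x => L (x, (Υ z).2)) z.2
        + gradient (fun y => L (z.1, y)) z.2
        + Fminus (z.2, (Υ z).2) + Fplus (z.1, z.2) = 0) :
    ∀ z ∈ S, FLp z = FLm (Υ z) :=
  legendre_transform_flow_identity_general L Fplus Fminus FLp FLm hFLp hFLm S Υ hstep hEL
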